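/- arXiv:1508.05337 — 5 statements merged into one kernel-verified Lean document; each statement's English description precedes it below -/
import Mathlib

section
/- For every d ∈ ℕ, every Borel set A ⊆ [0,1]^d, and every subset K ⊆ [d], the cylinder [A]_K is Lebesgue measurable (i.e., it lies in the completion of the Borel σ-algebra of [0,1]^d with respect to Lebesgue measure). -/
open MeasureTheory unitInterval

/-- `cyl A K` is the maximal cylinder subset of `A` that is free in the coordinates
outside `K`: the set of `ω` such that every `ω'` agreeing with `ω` on `K` lies in `A`. -/
def cyl {ι S : Type*} (A : Set (ι → S)) (K : Set ι) : Set (ι → S) :=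
  {ω | ∀ ω' : ι → S, (∀ i ∈ K, ω' i = ω i) → ω' ∈ A}

/-- The BKR combination `A □ B := ⋃_{K ⊆ [d]} ([A]_K ∩ [B]_{Kᶜ})`. -/
def bkr {ι S : Type*} (A B : Set (ι → S)) : Set (ι → S) :=
  ⋃ K : Set ι, cyl A K ∩ cyl B Kᶜ

/-- The simultaneous `r`-fold BKR combination: union over pairwise disjoint
`J_1, …, J_r` of `⋂ i, [A i]_{J i}`. -/
def bkrMulti {ι S : Type*} (r : ℕ) (A : Fin r → Set (ι → S)) : Set (ι → S) :=
  ⋃ (J : Fin r → Set ι) (_ : Pairwise (Function.onFun Disjoint J)), ⋂ i, cyl (A i) (J i)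

open scoped ENNReal

/-!
The complement of `[A]_K` is the preimage, under the restriction `ω ↦ ω|_K`, of the image of
`Aᶜ` under that restriction, which is a continuous image of a Borel set, hence analytic.
The restriction is quasi-measure-preserving, so everything reduces to the classical fact that
an analytic set `S = range f`, with `f : ℕ^ℕ → X` continuous, is null measurable for a finite
Borel measure. For that, given `t < μ S`, continuity from below of the outer measure lets us
choose bounds `n₀, n₁, …` one after the other such that `t < μ (f '' {x | ∀ i < k, x i ≤ n i})`
for all `k`. The closed set `⋂ k, closure (f '' {x | ∀ i < k, x i ≤ n i})` has measure at least
`t` and lies in the image of the compact set `∏ i, [0, n i]`, hence in `S`.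
-/

open Set Filter Topology

namespace MeasureTheory

variable {X : Type*} [MeasurableSpace X] {μ : Measure X}

theorem NullMeasurableSet.of_forall_lt_exists_measurableSet_subset {s : Set X} (hs : μ s ≠ ∞)
    (h : ∀ t < μ s, ∃ u ⊆ s, MeasurableSet u ∧ t ≤ μ u) : NullMeasurableSet s μ := by
  rcases eq_zero_or_pos (μ s) with h0 | hpos
  · exact .of_null h0
  obtain ⟨t, -, ht_lt, ht_lim⟩ := exists_seq_strictMono_tendsto' hpos
  choose u hus hu htu using fun j => h (t j) (ht_lt j).2
  have hU : MeasurableSet (⋃ j, u j) := .iUnion hu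
  have hle : μ s ≤ μ (⋃ j, u j) :=
    le_of_tendsto' ht_lim fun j => (htu j).trans (measure_mono (subset_iUnion u j))
  exact hU.nullMeasurableSet.congr
    (ae_eq_of_subset_of_measure_ge (iUnion_subset hus) hle hU.nullMeasurableSet hs)

theorem exists_lt_measure_image_inter_setOf_le (f : (ℕ → ℕ) → X) (E : Set (ℕ → ℕ))
    (k : ℕ) {t : ℝ≥0∞} (ht : t < μ (f '' E)) : ∃ N, t < μ (f '' (E ∩ {x | x k ≤ N})) := by
  have hE : f '' E = ⋃ N, f '' (E ∩ {x | x k ≤ N}) := by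
    rw [← image_iUnion, ← inter_iUnion, iUnion_eq_univ_iff.2 fun x => ⟨x k, le_refl (x k)⟩,
      inter_univ]
  have hmono : Monotone fun N => f '' (E ∩ {x | x k ≤ N}) := fun _ _ hN =>
    image_mono (inter_subset_inter_right _ fun _ hx => le_trans hx hN)
  rwa [hE, hmono.measure_iUnion, lt_iSup_iff] at ht

end MeasureTheory

theorem exists_seq_forall_setOf_forall_lt_le (P : Set (ℕ → ℕ) → Prop) (h_univ : P univ)
    (h_step : ∀ E k, P E → ∃ N, P (E ∩ {x | x k ≤ N})) :
    ∃ n : ℕ → ℕ, ∀ k, P {x | ∀ i < k, x i ≤ n i} := by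
  have h_step' : ∀ E k, ∃ N, P E → P (E ∩ {x | x k ≤ N}) := fun E k => by
    by_cases hE : P E
    · obtain ⟨N, hN⟩ := h_step E k hE
      exact ⟨N, fun _ => hN⟩
    · exact ⟨0, fun h => absurd h hE⟩
  choose next h_next using h_step'
  let E : ℕ → Set (ℕ → ℕ) := fun k =>
    Nat.rec univ (fun k E => E ∩ {x | x k ≤ next E k}) k
  refine ⟨fun k => next (E k) k, fun k => ?_⟩
  have hE : ∀ k, E k = {x | ∀ i < k, x i ≤ next (E i) i} ∧ P (E k) := by
    intro k
    induction k with
    | zero => exact ⟨by simp [E], h_univ⟩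
    | succ k ih =>
      refine ⟨?_, h_next _ _ ih.2⟩
      change E k ∩ _ = _
      rw [ih.1]
      ext x
      simp only [mem_inter_iff, mem_ofPred_eq, Nat.lt_succ_iff_lt_or_eq]
      constructor
      · rintro ⟨h, hk⟩ i (hi | rfl)
        exacts [h i hi, hk]
      · exact fun h => ⟨fun i hi => h i (.inl hi), h k (.inr rfl)⟩
  exact (hE k).1 ▸ (hE k).2

theorem iInter_closure_image_subset_image_pi_Iic {X : Type*} [MetricSpace X]
    {f : (ℕ → ℕ) → X} (hf : Continuous f) (n : ℕ → ℕ) :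
    ⋂ k, closure (f '' {x | ∀ i < k, x i ≤ n i}) ⊆ f '' univ.pi fun i => Iic (n i) := by
  intro y hy
  have h_approx : ∀ k : ℕ, ∃ x, (∀ i < k, x i ≤ n i) ∧ dist y (f x) < 1 / (k + 1) := by
    intro k
    obtain ⟨_, ⟨x, hx, rfl⟩, hd⟩ :=
      Metric.mem_closure_iff.1 (mem_iInter.1 hy k) (1 / (k + 1)) Nat.one_div_pos_of_nat
    exact ⟨x, hx, hd⟩
  choose x hx_le hx_dist using h_approx
  have hC : IsCompact (univ.pi fun i => Iic (n i)) :=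
    isCompact_univ_pi fun i => (finite_Iic (n i)).isCompact
  obtain ⟨a, haC, φ, hφ, h_clamp⟩ := hC.tendsto_subseq (x := fun k i => min (x k i) (n i))
    fun k i _ => mem_Iic.2 (min_le_right _ _)
  -- The clamped sequence agrees with `x (φ j)` in coordinate `i` as soon as `i < φ j`.
  have hxa : Tendsto (x ∘ φ) atTop (𝓝 a) := by
    refine tendsto_pi_nhds.2 fun i => (tendsto_pi_nhds.1 h_clamp i).congr' ?_
    filter_upwards [eventually_gt_atTop i] with j hj
    exact min_eq_left (hx_le (φ j) i (hj.trans_le hφ.le_apply))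
  have hfy : Tendsto (f ∘ x) atTop (𝓝 y) := by
    refine tendsto_iff_dist_tendsto_zero.2 (squeeze_zero (fun _ => dist_nonneg) (fun k => ?_)
      tendsto_one_div_add_atTop_nhds_zero_nat)
    rw [dist_comm]
    exact (hx_dist k).le
  exact ⟨a, haC, tendsto_nhds_unique ((hf.tendsto a).comp hxa) (hfy.comp hφ.tendsto_atTop)⟩

namespace MeasureTheory

theorem AnalyticSet.nullMeasurableSet {X : Type*} [MetricSpace X] [MeasurableSpace X]
    [OpensMeasurableSpace X] {s : Set X} (hs : AnalyticSet s) (μ : Measure X)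
    [IsFiniteMeasure μ] : NullMeasurableSet s μ := by
  rw [AnalyticSet_def] at hs
  rcases hs with rfl | ⟨f, hf, rfl⟩
  · exact nullMeasurableSet_empty
  refine .of_forall_lt_exists_measurableSet_subset (measure_ne_top μ _) fun t ht => ?_
  obtain ⟨n, hn⟩ := exists_seq_forall_setOf_forall_lt_le (fun E => t < μ (f '' E))
    (by rwa [image_univ]) fun E k => exists_lt_measure_image_inter_setOf_le f E k
  set F : ℕ → Set X := fun k => closure (f '' {x | ∀ i < k, x i ≤ n i})
  have hF_anti : Antitone F := fun k l hkl =>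
    closure_mono (image_mono fun x hx i hi => hx i (hi.trans_le hkl))
  refine ⟨⋂ k, F k, (iInter_closure_image_subset_image_pi_Iic hf n).trans
    (image_subset_range _ _), (isClosed_iInter fun _ => isClosed_closure).measurableSet, ?_⟩
  rw [hF_anti.measure_iInter (fun _ => isClosed_closure.nullMeasurableSet)
    ⟨0, measure_ne_top μ _⟩]
  exact le_iInf fun k => (hn k).le.trans (measure_mono subset_closure)

theorem Measure.quasiMeasurePreserving_domRestrict {ι : Type*} [Fintype ι] {α : ι → Type*}
    [∀ i, MeasurableSpace (α i)] (μ : ∀ i, Measure (α i)) [∀ i, SigmaFinite (μ i)]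
    (K : Set ι) [DecidablePred (· ∈ K)] :
    QuasiMeasurePreserving K.domRestrict (Measure.pi μ) (Measure.pi fun i : K => μ i) := by
  have h_fst : QuasiMeasurePreserving Prod.fst
      ((Measure.pi fun i : K => μ i).prod (Measure.pi fun i : {i // i ∉ K} => μ i))
      (Measure.pi fun i : K => μ i) :=
    quasiMeasurePreserving_fst
  exact h_fst.comp (measurePreserving_piEquivPiSubtypeProd μ (· ∈ K)).quasiMeasurePreserving

end MeasureTheory

theorem cyl_eq_compl_preimage_image_compl {ι S : Type*} (A : Set (ι → S)) (K : Set ι) :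
    cyl A K = (K.domRestrict ⁻¹' (K.domRestrict '' Aᶜ))ᶜ := by
  ext ω
  simp only [cyl, mem_ofPred_eq, mem_compl_iff, mem_preimage, mem_image, not_exists, not_and,
    funext_iff, Subtype.forall, Set.domRestrict]
  exact forall_congr' fun ω' =>
    ⟨fun h hω' hK => hω' (h hK), fun h hK => by_contra fun hω' => h hω' hK⟩

/-- For every Borel set `A` in `[0,1]^d` and every `K ⊆ [d]`, the cylinder `[A]_K`
is Lebesgue measurable (lies in the completion of the Borel σ-algebra w.r.t. Lebesgue measure). -/
theorem cylinder_nullMeasurable (d : ℕ) (A : Set (Fin d → I)) (hA : MeasurableSet A)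
    (K : Set (Fin d)) :
    NullMeasurableSet (cyl A K) (volume : Measure (Fin d → I)) := by
  classical
  rw [cyl_eq_compl_preimage_image_compl]
  have h_analytic : AnalyticSet (K.domRestrict '' Aᶜ) :=
    hA.compl.analyticSet.image_of_continuous (Pi.continuous_domRestrict K)
  exact ((h_analytic.nullMeasurableSet volume).preimage
    (Measure.quasiMeasurePreserving_domRestrict _ K)).compl
end

section
/- For every d, r ∈ ℕ with r ≥ 1 and all Borel sets A_1, …, A_r ⊆ [0,1]^d, the r-fold BKR combination □_{i=1}^r A_i is Lebesgue measurable. -/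
open MeasureTheory unitInterval

/-!
The complement of a cylinder `[A]_K` is the image of the Borel set `Aᶜ × [0,1]^d` under the
continuous map that takes the `K`-coordinates from the first factor and the others from the
second, so it is analytic. Analytic sets are universally measurable (Lusin): if `f` is a
continuous map from Baire space, bounding the coordinates one at a time while keeping the
outer measure of the image above `c` produces closed sets `closure (f '' boundedPrefix n k)`
whose intersection has measure `≥ c` and, since an ultrafilter with bounded coordinates
converges in Baire space, lies in `range f`. The BKR
combination is a countable union of finite intersections of such cylinders.
-/

open Filter Topology Set ENNReal

def boundedPrefix (n : ℕ → ℕ) (k : ℕ) : Set (ℕ → ℕ) :=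
  {x | ∀ j < k, x j ≤ n j}

lemma antitone_boundedPrefix (n : ℕ → ℕ) : Antitone (boundedPrefix n) :=
  fun _ _ hkl _ hx j hj => hx j (hj.trans_le hkl)

lemma Ultrafilter.exists_le_nhds_of_eventually_mem_isCompact {ι X : Type*}
    [TopologicalSpace X] {K : ι → Set X} (hK : ∀ i, IsCompact (K i)) (U : Ultrafilter (ι → X))
    (hU : ∀ i, ∀ᶠ x in (U : Filter (ι → X)), x i ∈ K i) : ∃ a, (U : Filter (ι → X)) ≤ 𝓝 a := by
  choose a _ ha using fun i => (hK i).ultrafilter_le_nhds' (U.map fun x : ι → X => x i) (hU i)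
  exact ⟨a, nhds_pi (a := a) ▸ le_pi.2 ha⟩

lemma iInter_closure_image_boundedPrefix_subset_range {Y : Type*} [TopologicalSpace Y]
    [T2Space Y] {f : (ℕ → ℕ) → Y} (hf : Continuous f) (n : ℕ → ℕ) :
    ⋂ k, closure (f '' boundedPrefix n k) ⊆ range f := by
  intro y hy
  have hbasis := (hasBasis_iInf_principal (antitone_boundedPrefix n).directed_ge).map f
  have hcluster : MapClusterPt y (⨅ k, 𝓟 (boundedPrefix n k)) f :=
    hbasis.clusterPt_iff_forall_mem_closure.2 fun k _ => mem_iInter.1 hy k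
  obtain ⟨U, hU, hUy⟩ := mapClusterPt_iff_ultrafilter.1 hcluster
  have hbounded : ∀ j, ∀ᶠ x in (U : Filter (ℕ → ℕ)), x j ∈ Iic (n j) := fun j =>
    mem_of_superset (hU (mem_iInf_of_mem (j + 1) (mem_principal_self _)))
      fun _ (hx : _ ∈ boundedPrefix n (j + 1)) => hx j j.lt_succ_self
  obtain ⟨a, ha⟩ := U.exists_le_nhds_of_eventually_mem_isCompact
    (fun j => (finite_Iic (n j)).isCompact) hbounded
  exact ⟨a, tendsto_nhds_unique ((hf.tendsto a).mono_left ha) hUy⟩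

section OuterMeasure

variable {α Y : Type*} [MeasurableSpace Y] {μ : Measure Y}

lemma exists_lt_measure_image_inter_setOf_le (f : α → Y) (g : α → ℕ) {s : Set α}
    {c : ℝ≥0∞} (hc : c < μ (f '' s)) : ∃ m, c < μ (f '' (s ∩ {x | g x ≤ m})) := by
  have hmono : Monotone fun m : ℕ => f '' (s ∩ {x | g x ≤ m}) := fun _ _ hab =>
    image_mono (inter_subset_inter_right _ fun _ hx => le_trans hx hab)
  have hcover : ⋃ m : ℕ, f '' (s ∩ {x | g x ≤ m}) = f '' s := by
    rw [← image_iUnion, ← inter_iUnion,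
      iUnion_eq_univ_iff.2 fun x => ⟨g x, show g x ≤ g x from le_rfl⟩, inter_univ]
  rw [← hcover, hmono.measure_iUnion] at hc
  exact lt_iSup_iff.1 hc

lemma exists_forall_lt_measure_image_boundedPrefix (f : (ℕ → ℕ) → Y) {c : ℝ≥0∞}
    (hc : c < μ (range f)) : ∃ n : ℕ → ℕ, ∀ k, c < μ (f '' boundedPrefix n k) := by
  let Large := {s : Set (ℕ → ℕ) // c < μ (f '' s)}
  have hstep (k : ℕ) (s : Large) := exists_lt_measure_image_inter_setOf_le f (· k) s.2
  let bound (k : ℕ) (s : Large) : ℕ := (hstep k s).choose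
  let T (k : ℕ) : Large := Nat.rec ⟨univ, by rwa [image_univ]⟩
    (fun k s => ⟨s.1 ∩ {x | x k ≤ bound k s}, (hstep k s).choose_spec⟩) k
  refine ⟨fun k => bound k (T k), fun k => (T k).2.trans_le (measure_mono (image_mono ?_))⟩
  induction k with
  | zero => simp [boundedPrefix]
  | succ k ih =>
    rintro x ⟨hx, hxk⟩ j hj
    rcases Nat.lt_succ_iff_lt_or_eq.1 hj with hj | rfl
    exacts [ih hx j hj, hxk]

lemma nullMeasurableSet_of_forall_lt_exists_measurableSet_subset {E : Set Y} (hE : μ E ≠ ∞)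
    (h : ∀ c < μ E, ∃ K ⊆ E, MeasurableSet K ∧ c ≤ μ K) : NullMeasurableSet E μ := by
  rcases eq_zero_or_pos (μ E) with h0 | hpos
  · exact .of_null h0
  obtain ⟨u, -, hu, hlim⟩ := exists_seq_strictMono_tendsto' hpos
  choose K hKE hK hKu using fun n => h (u n) (hu n).2
  have hG : MeasurableSet (⋃ n, K n) := .iUnion hK
  have hle : μ E ≤ μ (⋃ n, K n) :=
    le_of_tendsto' hlim fun n => (hKu n).trans (measure_mono (subset_iUnion K n))
  exact hG.nullMeasurableSet.congr
    (ae_eq_of_subset_of_measure_ge (iUnion_subset hKE) hle hG.nullMeasurableSet hE)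

end OuterMeasure

section Analytic

variable {Y : Type*} [TopologicalSpace Y] [T2Space Y] [MeasurableSpace Y] [OpensMeasurableSpace Y]
  {μ : Measure Y} [IsFiniteMeasure μ]

lemma exists_measurableSet_subset_range_le_measure {f : (ℕ → ℕ) → Y} (hf : Continuous f)
    {c : ℝ≥0∞} (hc : c < μ (range f)) : ∃ K ⊆ range f, MeasurableSet K ∧ c ≤ μ K := by
  obtain ⟨n, hn⟩ := exists_forall_lt_measure_image_boundedPrefix f hc
  have hanti : Antitone fun k => closure (f '' boundedPrefix n k) := fun _ _ hkl =>
    closure_mono (image_mono (antitone_boundedPrefix n hkl))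
  refine ⟨_, iInter_closure_image_boundedPrefix_subset_range hf n,
    .iInter fun _ => isClosed_closure.measurableSet, ?_⟩
  rw [hanti.measure_iInter (fun _ => isClosed_closure.measurableSet.nullMeasurableSet)
    ⟨0, measure_ne_top μ _⟩]
  exact le_iInf fun k => (hn k).le.trans (measure_mono subset_closure)

theorem MeasureTheory.AnalyticSet.nullMeasurableSet_s2 {s : Set Y} (hs : AnalyticSet s) :
    NullMeasurableSet s μ := by
  rw [AnalyticSet_def] at hs
  rcases hs with rfl | ⟨f, hf, rfl⟩
  · exact .empty
  · exact nullMeasurableSet_of_forall_lt_exists_measurableSet_subset (measure_ne_top μ _)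
      fun _ => exists_measurableSet_subset_range_le_measure hf

end Analytic

section Cylinder

variable {ι S : Type*}

lemma compl_cyl_eq_image_piecewise (A : Set (ι → S)) (K : Set ι) [DecidablePred (· ∈ K)] :
    (cyl A K)ᶜ = (fun p : (ι → S) × (ι → S) => K.piecewise p.1 p.2) '' (Aᶜ ×ˢ univ) := by
  ext ω
  simp only [cyl, mem_compl_iff, mem_ofPred_eq, not_forall, mem_image, mem_prod, mem_univ,
    and_true, Prod.exists, exists_prop]
  constructor
  · rintro ⟨ω', hagree, hω'⟩
    refine ⟨ω', ω, hω', funext fun i => ?_⟩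
    by_cases hi : i ∈ K <;> simp [hi, hagree]
  · rintro ⟨ω', τ, hω', rfl⟩
    exact ⟨ω', fun i hi => (piecewise_eq_of_mem _ _ _ hi).symm, hω'⟩

variable [TopologicalSpace S] [PolishSpace S] [MeasurableSpace S] [BorelSpace S]
  {μ : Measure (ι → S)} [IsFiniteMeasure μ]

lemma nullMeasurableSet_cyl [Countable ι] {A : Set (ι → S)} (hA : MeasurableSet A) (K : Set ι) :
    NullMeasurableSet (cyl A K) μ := by
  classical
  have hcont : Continuous fun p : (ι → S) × (ι → S) => K.piecewise p.1 p.2 :=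
    continuous_pi fun i => by
      by_cases hi : i ∈ K <;> simp only [piecewise, hi, if_true, if_false] <;> fun_prop
  have hanalytic : AnalyticSet (cyl A K)ᶜ := by
    rw [compl_cyl_eq_image_piecewise]
    exact (hA.compl.prod .univ).analyticSet.image_of_continuous hcont
  simpa using hanalytic.nullMeasurableSet_s2.compl

lemma nullMeasurableSet_bkrMulti [Finite ι] {r : ℕ} {A : Fin r → Set (ι → S)}
    (hA : ∀ i, MeasurableSet (A i)) : NullMeasurableSet (bkrMulti r A) μ :=
  .iUnion fun J => .iUnion fun _ => .iInter fun i => nullMeasurableSet_cyl (hA i) (J i)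

end Cylinder

theorem bkrMulti_nullMeasurable_general (d r : ℕ) (A : Fin r → Set (Fin d → I))
    (hA : ∀ i, MeasurableSet (A i)) :
    NullMeasurableSet (bkrMulti r A) (volume : Measure (Fin d → I)) :=
  nullMeasurableSet_bkrMulti hA

/-- For all Borel sets `A_1, ..., A_r` in `[0,1]^d` (with `r ≥ 1`), the `r`-fold BKR
combination is Lebesgue measurable. -/
theorem bkrMulti_nullMeasurable (d r : ℕ) (hr : 1 ≤ r) (A : Fin r → Set (Fin d → I))
    (hA : ∀ i, MeasurableSet (A i)) :
    NullMeasurableSet (bkrMulti r A) (volume : Measure (Fin d → I)) :=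
  bkrMulti_nullMeasurable_general d r A hA
end

section
/- There exist Lebesgue measurable sets A, B ⊆ [0,1]^2 such that the BKR combination A □ B is not Lebesgue measurable. -/
/-!
Take `A = {ω | ω 1 ≠ 0}` and `B = {ω | ω 1 ≠ 0 ∨ ω 0 ∈ W}` for a Vitali set `W ⊆ [0,1]`. Both
are conull, yet `A □ B = {ω | ω 1 ≠ 0 ∧ ω 0 ∈ W}` agrees up to a null set with the cylinder over
`W`, which is not Lebesgue measurable because its base is not.
-/

open MeasureTheory unitInterval

open Set Function Topology

section Cylinder

variable {ι S : Type*}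

lemma cyl_subset (A : Set (ι → S)) (K : Set ι) : cyl A K ⊆ A :=
  fun ω hω => hω ω fun _ _ => rfl

/-- Resetting coordinate `i` to `a` shows that any `K` contributing to the union must contain `i`,
and then membership in the `Kᶜ`-cylinder of the second set forces `ω j ∈ W`. -/
theorem bkr_setOf_ne_setOf_ne_or_mem [DecidableEq ι] {i j : ι} (hij : i ≠ j) (a : S)
    (W : Set S) :
    bkr {ω : ι → S | ω i ≠ a} {ω | ω i ≠ a ∨ ω j ∈ W} = {ω | ω i ≠ a ∧ ω j ∈ W} := by
  ext ω
  simp only [bkr, mem_iUnion]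
  constructor
  · rintro ⟨K, hA, hB⟩
    have hiK : i ∈ K := by
      by_contra hi
      exact hA (update ω i a) (fun k hk => update_of_ne (ne_of_mem_of_not_mem hk hi) _ _)
        (update_self i a ω)
    have hjW := hB (update ω i a) fun k hk => update_of_ne (ne_of_mem_of_not_mem hiK hk).symm _ _
    simp only [mem_ofPred_eq, update_self, ne_eq, not_true_eq_false, update_of_ne hij.symm,
      false_or] at hjW
    exact ⟨cyl_subset _ _ hA, hjW⟩
  · rintro ⟨hi, hj⟩
    refine ⟨{i}, fun ω' hω' => ?_, fun ω' hω' => Or.inr ?_⟩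
    · simpa only [mem_ofPred_eq, hω' i rfl] using hi
    · simpa only [hω' j hij.symm] using hj

end Cylinder

theorem MeasureTheory.NullMeasurableSet.of_preimage_eval {n : ℕ} {α : Fin (n + 1) → Type*}
    [∀ i, MeasurableSpace (α i)] {μ : ∀ i, Measure (α i)} [∀ i, IsProbabilityMeasure (μ i)]
    (i : Fin (n + 1)) {s : Set (α i)} (h : NullMeasurableSet (eval i ⁻¹' s) (Measure.pi μ)) :
    NullMeasurableSet s (μ i) := by
  have he := measurePreserving_piFinSuccAbove μ i
  refine NullMeasurableSet.of_preimage_fst (ν := Measure.pi fun j => μ (i.succAbove j)) ?_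
  simpa [preimage_preimage] using h.preimage he.symm.quasiMeasurePreserving

/-- Countably many translates of `V` cover `G`, so `V` has positive measure, and by Steinhaus
`V - V` is a neighbourhood of `0`, hence contains a nonzero element of `H`. -/
theorem not_nullMeasurableSet_of_countable_transversal {G : Type*} [AddGroup G]
    [TopologicalSpace G] [IsTopologicalAddGroup G] [LocallyCompactSpace G] [MeasurableSpace G]
    [BorelSpace G] (μ : Measure G) [μ.IsAddHaarMeasure] [μ.InnerRegular] {H V : Set G}
    (hH : H.Countable) (hH0 : (0 : G) ∈ closure (H \ {0})) (hcover : ∀ x, ∃ h ∈ H, h + x ∈ V)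
    (hsep : ∀ v ∈ V, ∀ w ∈ V, v - w ∈ H → v = w) : ¬ NullMeasurableSet V μ := by
  intro hV
  obtain ⟨T, hTV, hT, hTae⟩ := hV.exists_measurable_subset_ae_eq
  have hμT : 0 < μ T := by
    rw [measure_congr hTae, pos_iff_ne_zero]
    intro hV0
    refine NeZero.ne (μ univ) (measure_mono_null (fun x _ => ?_)
      ((measure_biUnion_null_iff hH).2 fun h _ => (measure_preimage_add μ h V).trans hV0))
    obtain ⟨h, hH, hx⟩ := hcover x
    exact mem_biUnion hH hx
  obtain ⟨_, ⟨v, hv, w, hw, rfl⟩, hH, hne⟩ :=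
    mem_closure_iff_nhds.1 hH0 _ (Measure.sub_mem_nhds_zero_of_addHaar_pos μ T hT hμT)
  exact hne (sub_eq_zero.2 (hsep v (hTV hv) w (hTV hw) hH))

noncomputable def ratSubgroup : AddSubgroup ℝ := (Rat.castHom ℝ).toAddMonoidHom.range

lemma mem_ratSubgroup {x : ℝ} : x ∈ ratSubgroup ↔ ∃ q : ℚ, (q : ℝ) = x := AddMonoidHom.mem_range

lemma ratSubgroup_mk_fract (x : ℝ) : (↑(Int.fract x) : ℝ ⧸ ratSubgroup) = (x : ℝ ⧸ ratSubgroup) :=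
  QuotientAddGroup.eq_iff_sub_mem.2 (mem_ratSubgroup.2 ⟨-⌊x⌋, by rw [Int.fract]; push_cast; ring⟩)

noncomputable def vitaliSet : Set ℝ := range fun c : ℝ ⧸ ratSubgroup => Int.fract c.out

lemma vitaliSet_subset_Ico : vitaliSet ⊆ Ico 0 1 := by
  rintro _ ⟨c, rfl⟩
  exact ⟨Int.fract_nonneg _, Int.fract_lt_one _⟩

theorem not_nullMeasurableSet_vitaliSet : ¬ NullMeasurableSet vitaliSet volume := by
  refine not_nullMeasurableSet_of_countable_transversal volume (H := ratSubgroup) ?_ ?_ ?_ ?_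
  · rw [ratSubgroup, AddMonoidHom.coe_range]
    exact countable_range _
  · refine Real.mem_closure_iff.2 fun ε hε => ?_
    obtain ⟨q, hq0, hqε⟩ := exists_rat_btwn hε
    exact ⟨q, ⟨mem_ratSubgroup.2 ⟨q, rfl⟩, mem_singleton_iff.not.2 (by exact_mod_cast hq0.ne')⟩, by
      rw [sub_zero, abs_of_pos hq0]; exact hqε⟩
  · intro x
    obtain ⟨q, hq⟩ := mem_ratSubgroup.1 (QuotientAddGroup.eq_iff_sub_mem.1
      ((ratSubgroup_mk_fract _).trans (QuotientAddGroup.out_eq' (x : ℝ ⧸ ratSubgroup))))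
    exact ⟨q, mem_ratSubgroup.2 ⟨q, rfl⟩, by rw [hq, sub_add_cancel]; exact ⟨_, rfl⟩⟩
  · rintro _ ⟨c, rfl⟩ _ ⟨d, rfl⟩ h
    have hcd : c = d :=
      calc c = ↑(Int.fract c.out) := by rw [ratSubgroup_mk_fract, QuotientAddGroup.out_eq']
        _ = ↑(Int.fract d.out) := QuotientAddGroup.eq_iff_sub_mem.2 h
        _ = d := by rw [ratSubgroup_mk_fract, QuotientAddGroup.out_eq']
    rw [hcd]

theorem unitInterval.not_nullMeasurableSet_preimage_vitaliSet :
    ¬ NullMeasurableSet (((↑) : I → ℝ) ⁻¹' vitaliSet) volume := by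
  intro h
  have := Measure.NullMeasurableSet.subtype_coe nullMeasurableSet_Icc h
  rw [Subtype.image_preimage_coe, inter_eq_right.2 (vitaliSet_subset_Ico.trans Ico_subset_Icc_self)]
    at this
  exact not_nullMeasurableSet_vitaliSet this

/-- There exist Lebesgue measurable sets `A, B ⊆ [0,1]^2` such that the BKR combination
`A □ B` is not Lebesgue measurable. -/
theorem exists_bkr_not_nullMeasurable :
    ∃ A B : Set (Fin 2 → I),
      NullMeasurableSet A (volume : Measure (Fin 2 → I)) ∧
        NullMeasurableSet B (volume : Measure (Fin 2 → I)) ∧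
          ¬ NullMeasurableSet (bkr A B) (volume : Measure (Fin 2 → I)) := by
  set W : Set I := (↑) ⁻¹' vitaliSet
  have hA : ∀ᵐ ω : Fin 2 → I, ω 1 ≠ 0 := Measure.ae_eval_ne _ 1 0
  refine ⟨{ω | ω 1 ≠ 0}, {ω | ω 1 ≠ 0 ∨ ω 0 ∈ W}, (NullMeasurableSet.of_null hA).of_compl,
    (NullMeasurableSet.of_null (hA.mono fun _ => Or.inl)).of_compl, ?_⟩
  rw [bkr_setOf_ne_setOf_ne_or_mem (by decide)]
  intro h
  exact not_nullMeasurableSet_preimage_vitaliSet <|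
    .of_preimage_eval 0 (h.congr (inter_ae_eq_right_of_ae_eq_univ (ae_eq_univ.2 hA)))
end

section
/- Let I be a countable index set, for each i ∈ I let S_i ⊆ ℝ, and set Ω := ∏_{i ∈ I} S_i ⊆ ℝ^I. For r ≥ 2 and A_1, …, A_r ⊆ Ω, define Â_j := A_j ∪ (ℝ^I ∖ Ω). Then the finite-witness r-fold BKR combination of A_1, …, A_r computed relative to the universe Ω equals (□_{j=1}^r Â_j) ∩ Ω, where □_{j=1}^r Â_j is the finite-witness r-fold BKR combination computed relative to the universe ℝ^I. -/
open MeasureTheory unitInterval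

/-- The cylinder `[A]_K` computed relative to a universe `Ω`. -/
def cylRel {ι S : Type*} (Ω A : Set (ι → S)) (K : Set ι) : Set (ι → S) :=
  {ω | ω ∈ Ω ∧ ∀ ω' ∈ Ω, (∀ i ∈ K, ω' i = ω i) → ω' ∈ A}

/-- The finite-witness `r`-fold BKR combination computed relative to a universe `Ω`. -/
def bkrFinMultiRel {ι S : Type*} (Ω : Set (ι → S)) (r : ℕ) (A : Fin r → Set (ι → S)) :
    Set (ι → S) :=
  ⋃ (J : Fin r → Finset ι) (_ : Pairwise (Function.onFun Disjoint J)),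
    ⋂ i, cylRel Ω (A i) ↑(J i)

/-- The finite-witness `r`-fold BKR combination relative to `ℝ^I` (the universe). -/
def bkrFinMulti {ι S : Type*} (r : ℕ) (A : Fin r → Set (ι → S)) : Set (ι → S) :=
  ⋃ (J : Fin r → Finset ι) (_ : Pairwise (Function.onFun Disjoint J)),
    ⋂ i, cyl (A i) ↑(J i)

/-- Let `I` be countable, `S_i ⊆ ℝ`, `Ω = ∏ S_i ⊆ ℝ^I`.  For `r ≥ 2` and
`A_1, ..., A_r ⊆ Ω`, setting `Â_j := A_j ∪ (ℝ^I ∖ Ω)`, the finite-witness `r`-fold BKR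
combination of the `A_j` relative to `Ω` equals `(□_j Â_j) ∩ Ω`, where `□_j Â_j` is
computed relative to `ℝ^I`. -/
theorem bkrFinMultiRel_eq_inter {Idx : Type*} [Countable Idx] (S : Idx → Set ℝ)
    (r : ℕ) (hr : 2 ≤ r) (A : Fin r → Set (Idx → ℝ))
    (hA : ∀ j, A j ⊆ {ω | ∀ i, ω i ∈ S i}) :
    bkrFinMultiRel {ω | ∀ i, ω i ∈ S i} r A =
      bkrFinMulti r (fun j => A j ∪ {ω : Idx → ℝ | ∀ i, ω i ∈ S i}ᶜ) ∩
        {ω | ∀ i, ω i ∈ S i} := by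
  ext ω
  constructor
  · rintro hω
    simp only [bkrFinMultiRel, Set.mem_iUnion] at hω
    obtain ⟨J, hJ, hmem⟩ := hω
    rw [Set.mem_iInter] at hmem
    have hΩ : ω ∈ {ω : Idx → ℝ | ∀ i, ω i ∈ S i} := (hmem ⟨0, by omega⟩).1
    refine ⟨?_, hΩ⟩
    simp only [bkrFinMulti, Set.mem_iUnion]
    refine ⟨J, hJ, Set.mem_iInter.2 fun i => ?_⟩
    intro ω' hω'
    by_cases h : ω' ∈ {ω : Idx → ℝ | ∀ i, ω i ∈ S i}
    · exact Or.inl ((hmem i).2 ω' h hω')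
    · exact Or.inr h
  · rintro ⟨hb, hΩ⟩
    simp only [bkrFinMulti, Set.mem_iUnion] at hb
    obtain ⟨J, hJ, hmem⟩ := hb
    rw [Set.mem_iInter] at hmem
    simp only [bkrFinMultiRel, Set.mem_iUnion]
    refine ⟨J, hJ, Set.mem_iInter.2 fun i => ⟨hΩ, fun ω' hω' hag => ?_⟩⟩
    rcases hmem i ω' hag with h | h
    · exact h
    · exact absurd hω' h
end

section
/- Let A ⊆ {0,1}^6 be the union of the following eight cylinder sets, each fixing two coordinates: {ω : ω_1 = ω_2 = 1}, {ω : ω_3 = ω_4 = 1}, {ω : ω_1 = 1, ω_4 = 0}, {ω : ω_2 = ω_3 = 1}, {ω : ω_3 = ω_4 = 0}, {ω : ω_5 = ω_6 = 0}, {ω : ω_3 = 1, ω_6 = 0}, {ω : ω_4 = ω_5 = 0}. Then ((A □ A) □ A) □ A = ∅ while the point (1,1,1,0,0,0) belongs to (A □ A) □ (A □ A); in particular, ((A □ A) □ A) □ A ≠ (A □ A) □ (A □ A). -/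
open MeasureTheory unitInterval

/-- The set `A ⊆ {0,1}^6` of Example 8.3: the union of eight 2-cylinders
`11****, **11**, 1**0**, *11***, **00**, ****00, **1**0, ***00*`. -/
def exampleA : Set (Fin 6 → Fin 2) :=
  {ω | ω 0 = 1 ∧ ω 1 = 1} ∪ {ω | ω 2 = 1 ∧ ω 3 = 1} ∪ {ω | ω 0 = 1 ∧ ω 3 = 0} ∪
    {ω | ω 1 = 1 ∧ ω 2 = 1} ∪ {ω | ω 2 = 0 ∧ ω 3 = 0} ∪ {ω | ω 4 = 0 ∧ ω 5 = 0} ∪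
      {ω | ω 2 = 1 ∧ ω 5 = 0} ∪ {ω | ω 3 = 0 ∧ ω 4 = 0}

/-! ### Auxiliary numeric machinery -/

/-- Encode a point of `{0,1}^6` as a number below 64. -/
def idx6 (ω : Fin 6 → Fin 2) : ℕ :=
  (ω 0).val + 2 * (ω 1).val + 4 * (ω 2).val + 8 * (ω 3).val +
    16 * (ω 4).val + 32 * (ω 5).val

/-- Numeric version of the cylinder membership test: set `m`, coordinate set `k`,
point `n` (all coded as bitmasks). -/
def cylN (m k n : ℕ) : Bool :=
  (List.range 64).all fun n' => !((n ^^^ n') &&& k == 0) || m.testBit n'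

/-- Numeric version of the BKR membership test. -/
def bkrN (m1 m2 n : ℕ) : Bool :=
  (List.range 64).any fun k => cylN m1 k n && cylN m2 (63 ^^^ k) n

/-- Encode a coordinate set as a number below 64. -/
def maskOf (F : Finset (Fin 6)) : ℕ := ∑ i ∈ F, 2 ^ i.val

lemma auxOr (x : ℕ) (b : Bool) : (!(x == 0) || b) = true ↔ (x = 0 → b = true) := by
  cases b <;> simp

lemma cylN_eq (m k n : ℕ) :
    cylN m k n = true ↔ ∀ n' < 64, (n ^^^ n') &&& k = 0 → m.testBit n' = true := by
  simp only [cylN, List.all_eq_true, List.mem_range, auxOr]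

lemma bkrN_eq (m1 m2 n : ℕ) :
    bkrN m1 m2 n = true ↔ ∃ k < 64, cylN m1 k n = true ∧ cylN m2 (63 ^^^ k) n = true := by
  simp only [bkrN, List.any_eq_true, List.mem_range, Bool.and_eq_true]

lemma idx6_lt : ∀ ω : Fin 6 → Fin 2, idx6 ω < 64 := by decide
lemma idx6_bit : ∀ (ω : Fin 6 → Fin 2) (i : Fin 6), (idx6 ω).testBit i.val = (ω i == 1) := by
  decide
lemma idx6_surj : ∀ n < 64, ∃ ω : Fin 6 → Fin 2, idx6 ω = n := by decide
lemma maskOf_lt : ∀ F : Finset (Fin 6), maskOf F < 64 := by decide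
lemma maskOf_bit : ∀ (F : Finset (Fin 6)) (i : Fin 6),
    (maskOf F).testBit i.val = decide (i ∈ F) := by decide
lemma maskOf_compl : ∀ F : Finset (Fin 6), maskOf Fᶜ = 63 ^^^ maskOf F := by decide
lemma maskOf_surj : ∀ k < 64, ∃ F : Finset (Fin 6), maskOf F = k := by decide
lemma fin2_eq_of_beq : ∀ x y : Fin 2, (x == 1) = (y == 1) → x = y := by decide
lemma bool_xor_false : ∀ x y : Bool, (x ^^ y) = false → x = y := by decide

lemma cyl_bridge {A : Set (Fin 6 → Fin 2)} {M : ℕ}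
    (hA : ∀ ω, ω ∈ A ↔ M.testBit (idx6 ω) = true)
    (F : Finset (Fin 6)) (ω : Fin 6 → Fin 2) :
    ω ∈ cyl A ↑F ↔ cylN M (maskOf F) (idx6 ω) = true := by
  rw [cylN_eq]
  constructor
  · intro h n' hn' hand
    obtain ⟨ω', rfl⟩ := idx6_surj n' hn'
    refine (hA ω').mp (h ω' ?_)
    intro i hi
    have hbit : (maskOf F).testBit i.val = true := by
      rw [maskOf_bit]
      simpa using hi
    have h0 : ((idx6 ω ^^^ idx6 ω') &&& maskOf F).testBit i.val = false := by
      rw [hand]; exact Nat.zero_testBit _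
    rw [Nat.testBit_and, Nat.testBit_xor, hbit, Bool.and_true] at h0
    apply fin2_eq_of_beq
    rw [← idx6_bit ω' i, ← idx6_bit ω i]
    exact (bool_xor_false _ _ h0).symm
  · intro h ω' hagree
    refine (hA ω').mpr (h (idx6 ω') (idx6_lt ω') ?_)
    apply Nat.eq_of_testBit_eq
    intro j
    rw [Nat.zero_testBit, Nat.testBit_and, Nat.testBit_xor]
    by_cases hj : j < 6
    · by_cases hiF : (⟨j, hj⟩ : Fin 6) ∈ F
      · have heq : ω' ⟨j, hj⟩ = ω ⟨j, hj⟩ := hagree _ (by simpa using hiF)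
        have hb : (idx6 ω).testBit j = (idx6 ω').testBit j := by
          rw [show j = (⟨j, hj⟩ : Fin 6).val from rfl, idx6_bit, idx6_bit, heq]
        rw [← hb, Bool.xor_self, Bool.false_and]
      · have hm : (maskOf F).testBit j = false := by
          have := maskOf_bit F ⟨j, hj⟩
          simpa [hiF] using this
        rw [hm, Bool.and_false]
    · have hm : (maskOf F).testBit j = false := by
        apply Nat.testBit_eq_false_of_lt
        calc maskOf F < 64 := maskOf_lt F
        _ = 2 ^ 6 := rfl
        _ ≤ 2 ^ j := Nat.pow_le_pow_right (by norm_num) (by omega)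
      rw [hm, Bool.and_false]

lemma bkr_bridge {A B : Set (Fin 6 → Fin 2)} {M1 M2 : ℕ}
    (hA : ∀ ω, ω ∈ A ↔ M1.testBit (idx6 ω) = true)
    (hB : ∀ ω, ω ∈ B ↔ M2.testBit (idx6 ω) = true) :
    ∀ ω, ω ∈ bkr A B ↔ bkrN M1 M2 (idx6 ω) = true := by
  intro ω
  rw [bkrN_eq]
  constructor
  · intro hω
    simp only [bkr, Set.mem_iUnion, Set.mem_inter_iff] at hω
    obtain ⟨K, h1, h2⟩ := hω
    have hK : (↑K.toFinite.toFinset : Set (Fin 6)) = K := K.toFinite.coe_toFinset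
    refine ⟨maskOf K.toFinite.toFinset, maskOf_lt _, ?_, ?_⟩
    · rw [← cyl_bridge hA, hK]; exact h1
    · rw [← maskOf_compl, ← cyl_bridge hB, Finset.coe_compl, hK]; exact h2
  · rintro ⟨k, hk, h1, h2⟩
    obtain ⟨F, rfl⟩ := maskOf_surj k hk
    simp only [bkr, Set.mem_iUnion, Set.mem_inter_iff]
    refine ⟨↑F, (cyl_bridge hA F ω).mpr h1, ?_⟩
    rw [← Finset.coe_compl]
    exact (cyl_bridge hB Fᶜ ω).mpr (by rw [maskOf_compl]; exact h2)

/-! ### The concrete masks -/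

def aM : ℕ := 17937829619117850623
def b1M : ℕ := 9261794369770944767
def b2M : ℕ := 549764235496

lemma memA : ∀ ω, ω ∈ exampleA ↔ aM.testBit (idx6 ω) = true := by
  intro ω
  simp only [exampleA, Set.mem_union, Set.mem_setOf_eq]
  revert ω
  decide

set_option maxRecDepth 20000 in
set_option maxHeartbeats 8000000 in
lemma L1 : ((List.range 64).all fun n => bkrN aM aM n == b1M.testBit n) = true := by decide

set_option maxRecDepth 20000 in
set_option maxHeartbeats 8000000 in
lemma L2 : ((List.range 64).all fun n => bkrN b1M aM n == b2M.testBit n) = true := by decide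

set_option maxRecDepth 20000 in
set_option maxHeartbeats 8000000 in
lemma L3 : ((List.range 64).all fun n => bkrN b2M aM n == false) = true := by decide

set_option maxRecDepth 20000 in
set_option maxHeartbeats 8000000 in
lemma L4 : bkrN b1M b1M 7 = true := by decide

lemma L1' : ∀ n < 64, bkrN aM aM n = b1M.testBit n := by
  have := L1
  simp only [List.all_eq_true, List.mem_range, beq_iff_eq] at this
  exact fun n hn => this n hn

lemma L2' : ∀ n < 64, bkrN b1M aM n = b2M.testBit n := by
  have := L2
  simp only [List.all_eq_true, List.mem_range, beq_iff_eq] at this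
  exact fun n hn => this n hn

lemma L3' : ∀ n < 64, bkrN b2M aM n = false := by
  have := L3
  simp only [List.all_eq_true, List.mem_range, beq_iff_eq] at this
  exact fun n hn => this n hn

lemma memB1 : ∀ ω, ω ∈ bkr exampleA exampleA ↔ b1M.testBit (idx6 ω) = true := fun ω =>
  (bkr_bridge memA memA ω).trans (by rw [L1' _ (idx6_lt ω)])

lemma memB2 : ∀ ω, ω ∈ bkr (bkr exampleA exampleA) exampleA ↔ b2M.testBit (idx6 ω) = true :=
  fun ω => (bkr_bridge memB1 memA ω).trans (by rw [L2' _ (idx6_lt ω)])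

/-- For `A` as in Example 8.3, `((A □ A) □ A) □ A = ∅` while
`(1,1,1,0,0,0) ∈ (A □ A) □ (A □ A)`; in particular the two associations differ. -/
theorem example_assoc_ne :
    bkr (bkr (bkr exampleA exampleA) exampleA) exampleA = ∅ ∧
      (![1, 1, 1, 0, 0, 0] : Fin 6 → Fin 2) ∈ bkr (bkr exampleA exampleA) (bkr exampleA exampleA) ∧
        bkr (bkr (bkr exampleA exampleA) exampleA) exampleA ≠
          bkr (bkr exampleA exampleA) (bkr exampleA exampleA) := by
  have hempty : bkr (bkr (bkr exampleA exampleA) exampleA) exampleA = ∅ := by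
    rw [Set.eq_empty_iff_forall_notMem]
    intro ω hω
    have := (bkr_bridge memB2 memA ω).mp hω
    rw [L3' _ (idx6_lt ω)] at this
    exact Bool.false_ne_true this
  have hmem : (![1, 1, 1, 0, 0, 0] : Fin 6 → Fin 2) ∈
      bkr (bkr exampleA exampleA) (bkr exampleA exampleA) := by
    refine (bkr_bridge memB1 memB1 _).mpr ?_
    have h7 : idx6 (![1, 1, 1, 0, 0, 0] : Fin 6 → Fin 2) = 7 := by decide
    rw [h7]
    exact L4
  refine ⟨hempty, hmem, fun h => ?_⟩
  rw [← h, hempty] at hmem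
  exact Set.notMem_empty _ hmem
end
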